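/- In Dinkelbach's iteration, define ξ[t] = f(x[t])/g(x[t]) and x[t+1] = argmin_{x∈S}(f(x) − ξ[t]·g(x)), where g > 0 on S. Then ξ[t+1] ≤ ξ[t] for all t, i.e., the sequence of objective values is non-increasing. -/

import Mathlib

theorem div_le_of_isMinOn_sub_mul {α : Type*} {S : Set α} {f g : α → ℝ} {c : ℝ} {y z : α}
    (hz : IsMinOn (fun w => f w - c * g w) S z) (hy : y ∈ S) (hfy : f y = c * g y)
    (hgz : 0 < g z) : f z / g z ≤ c := by
  have hmin : f z - c * g z ≤ f y - c * g y := hz hy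
  rw [div_le_iff₀ hgz]
  linarith

/-- Monotonicity of Dinkelbach's iteration: with `ξ[t] = f(x[t])/g(x[t])` and
`x[t+1]` a minimizer of `f − ξ[t]·g` over `S` (where `g > 0` on `S`), the
sequence `ξ[t]` is non-increasing. -/
theorem stmt8 {α : Type*} (S : Set α) (f g : α → ℝ)
    (hg : ∀ x ∈ S, 0 < g x) (x : ℕ → α) (ξ : ℕ → ℝ)
    (hx : ∀ t, x t ∈ S)
    (hξ : ∀ t, ξ t = f (x t) / g (x t))
    (hmin : ∀ t, IsMinOn (fun y => f y - ξ t * g y) S (x (t + 1))) :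
    ∀ t, ξ (t + 1) ≤ ξ t := by
  intro t
  have hfx : f (x t) = ξ t * g (x t) := by
    rw [hξ t, div_mul_cancel₀ _ (hg _ (hx t)).ne']
  rw [hξ (t + 1)]
  exact div_le_of_isMinOn_sub_mul (hmin t) (hx t) hfx (hg _ (hx (t + 1)))
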